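/- There exist g₁, g₂ ∈ (0,1/2) such that ((1−2g₁)(1−2g₂))² < E(2g₂√(1−4g₁²))² + E(2g₁√(1−4g₂²))². (For non-generic GHZ-class states ψ(g₁,g₂,0,r) with r = 1, the accessible-entanglement monogamy relation E_a² ≥ E₁₂² + E₁₃² + E₂₃² is violated for some parameter values.) -/

import Mathlib

/-- Binary Shannon entropy (base 2), with the convention `0 * log₂ 0 = 0`
(automatic since `Real.logb 2 0 = 0`). -/
noncomputable def binEntropy (p : ℝ) : ℝ :=
  -p * Real.logb 2 p - (1 - p) * Real.logb 2 (1 - p)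

/-- Entanglement-of-formation function of the concurrence `C`. -/
noncomputable def eof (C : ℝ) : ℝ :=
  binEntropy ((1 + Real.sqrt (1 - C ^ 2)) / 2)

/-!
Take `g₁ = g₂ = 2/5`: the accessible entanglement is only `1/25`, while both concurrences
equal `12/25`. Concavity of the binary entropy, with `h(0) = 0` and
`h(1/2) = 1`, gives `h(q) ≥ 2 min(q, 1 - q)`, hence `E(C) ≥ 1 - √(1 - C²) ≥ C²/2`; at
`C = 12/25` this already beats the accessible entanglement by a wide margin.
-/

lemma binEntropy_eq_div_log_two (p : ℝ) : binEntropy p = Real.binEntropy p / Real.log 2 := by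
  simp only [binEntropy, Real.binEntropy, Real.logb, Real.log_inv]
  ring

lemma Real.two_mul_mul_log_two_le_binEntropy {q : ℝ} (hq₀ : 0 ≤ q) (hq : q ≤ 2⁻¹) :
    2 * q * Real.log 2 ≤ Real.binEntropy q := by
  -- `q` is the convex combination `2q • 2⁻¹ + (1 - 2q) • 0`.
  have h := Real.strictConcave_binEntropy.concaveOn.2
    (show (2⁻¹ : ℝ) ∈ Set.Icc 0 1 by norm_num) (show (0 : ℝ) ∈ Set.Icc 0 1 by norm_num)
    (show 0 ≤ 2 * q by linarith) (show 0 ≤ 1 - 2 * q by linarith) (by ring)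
  simp only [smul_eq_mul, Real.binEntropy_two_inv, Real.binEntropy_zero, mul_zero,
    add_zero] at h
  rwa [show 2 * q * 2⁻¹ = q by ring] at h

lemma two_mul_one_sub_le_binEntropy {p : ℝ} (hp : 2⁻¹ ≤ p) (hp₁ : p ≤ 1) :
    2 * (1 - p) ≤ binEntropy p := by
  rw [binEntropy_eq_div_log_two, le_div_iff₀ (Real.log_pos one_lt_two),
    ← Real.binEntropy_one_sub]
  exact Real.two_mul_mul_log_two_le_binEntropy (by linarith) (by linarith)

lemma sq_div_two_le_eof {C : ℝ} (hC : C ^ 2 ≤ 1) : C ^ 2 / 2 ≤ eof C := by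
  set s := √(1 - C ^ 2)
  have hs₀ : 0 ≤ s := Real.sqrt_nonneg _
  have hs₁ : s ≤ 1 := Real.sqrt_le_one.2 (by linarith [sq_nonneg C])
  have hs_sq : s ^ 2 = 1 - C ^ 2 := Real.sq_sqrt (by linarith)
  have hs : s ≤ 1 - C ^ 2 / 2 := by nlinarith
  calc C ^ 2 / 2 ≤ 2 * (1 - (1 + s) / 2) := by linarith
    _ ≤ eof C := two_mul_one_sub_le_binEntropy (by linarith) (by linarith)

/-- For non-generic GHZ-class states `ψ(g₁,g₂,0,1)`, the accessible-entanglement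
monogamy relation is violated for some parameter values. -/
theorem exists_accessible_monogamy_violation_two_params :
    ∃ g₁ ∈ Set.Ioo (0 : ℝ) (1 / 2), ∃ g₂ ∈ Set.Ioo (0 : ℝ) (1 / 2),
      ((1 - 2 * g₁) * (1 - 2 * g₂)) ^ 2 <
        (eof (2 * g₂ * Real.sqrt (1 - 4 * g₁ ^ 2))) ^ 2 +
        (eof (2 * g₁ * Real.sqrt (1 - 4 * g₂ ^ 2))) ^ 2 := by
  refine ⟨2 / 5, by norm_num, 2 / 5, by norm_num, ?_⟩
  have hsqrt : √(1 - 4 * (2 / 5 : ℝ) ^ 2) = 3 / 5 := by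
    rw [show (1 : ℝ) - 4 * (2 / 5) ^ 2 = (3 / 5) ^ 2 by norm_num, Real.sqrt_sq (by norm_num)]
  have hC : (2 : ℝ) * (2 / 5) * √(1 - 4 * (2 / 5) ^ 2) = 12 / 25 := by
    rw [hsqrt]; norm_num
  have hE := sq_div_two_le_eof (C := 12 / 25) (by norm_num)
  rw [hC]
  nlinarith
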